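/- Let V be a finite set, let κ : ℝ₊^V → ℝ be a positive definite monotone gauge, and let C := {x ∈ ℝ₊^V : κ(x) ≤ 1} be its unit convex corner. Then: (i) C is a convex corner; (ii) the dual gauge κ∘ is a positive definite monotone gauge with unit convex corner abl(C); (iii) κ∘∘ = κ and, equivalently, abl(abl(C)) = C; (iv) ⟨w,z⟩ ≤ κ(w)·κ∘(z) for every w,z ∈ ℝ₊^V. -/

import Mathlib

open scoped BigOperators Pointwise

variable {V : Type*} [Fintype V] [DecidableEq V]

/-- Inner product on `ℝ^V`. -/
def ip (w z : V → ℝ) : ℝ := ∑ i, w i * z i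

/-- `κ` is a positive definite monotone gauge on the nonnegative orthant of `ℝ^V`. -/
def IsPDMGauge (κ : (V → ℝ) → ℝ) : Prop :=
  κ 0 = 0 ∧
  (∀ w : V → ℝ, 0 ≤ w → 0 ≤ κ w) ∧
  (∀ (c : ℝ) (w : V → ℝ), 0 < c → 0 ≤ w → κ (c • w) = c * κ w) ∧
  (∀ w z : V → ℝ, 0 ≤ w → 0 ≤ z → κ (w + z) ≤ κ w + κ z) ∧
  (∀ w : V → ℝ, 0 ≤ w → w ≠ 0 → 0 < κ w) ∧
  (∀ w z : V → ℝ, 0 ≤ w → w ≤ z → κ w ≤ κ z)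

/-- The dual gauge `κ∘(z) = sup{⟨w,z⟩ : w ≥ 0, κ(w) ≤ 1}`. -/
noncomputable def dualGauge (κ : (V → ℝ) → ℝ) (z : V → ℝ) : ℝ :=
  sSup {r : ℝ | ∃ w : V → ℝ, 0 ≤ w ∧ κ w ≤ 1 ∧ r = ip w z}

/-- The antiblocker of a subset of the nonnegative orthant. -/
def abl (X : Set (V → ℝ)) : Set (V → ℝ) := {y | 0 ≤ y ∧ ∀ x ∈ X, ip x y ≤ 1}

/-- A convex corner: compact, convex, nonempty interior, subset of the nonnegative
orthant, and lower-comprehensive. -/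
def IsConvexCorner (C : Set (V → ℝ)) : Prop :=
  IsCompact C ∧ Convex ℝ C ∧ (interior C).Nonempty ∧ (∀ x ∈ C, 0 ≤ x) ∧
  ∀ x y : V → ℝ, 0 ≤ x → x ≤ y → y ∈ C → x ∈ C

/-- Minkowski functional of a set. -/
noncomputable def minkowski (C : Set (V → ℝ)) (x : V → ℝ) : ℝ :=
  sInf {μ : ℝ | 0 ≤ μ ∧ x ∈ μ • C}

/-- Support function of a set. -/
noncomputable def suppFn (C : Set (V → ℝ)) (y : V → ℝ) : ℝ :=
  sSup {r : ℝ | ∃ x ∈ C, r = ip x y}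

/-- A stable (independent) set of vertices. -/
def IsStableSet (G : SimpleGraph V) (S : Finset V) : Prop :=
  ∀ i ∈ S, ∀ j ∈ S, ¬ G.Adj i j

/-- Weighted stability number `α(G,w)`. -/
noncomputable def alphaW (G : SimpleGraph V) (w : V → ℝ) : ℝ :=
  sSup {r : ℝ | ∃ S : Finset V, IsStableSet G S ∧ r = ∑ i ∈ S, w i}

/-- Stability number `α(G)`. -/
noncomputable def stabilityNumber (G : SimpleGraph V) : ℕ :=
  sSup {n : ℕ | ∃ S : Finset V, IsStableSet G S ∧ S.card = n}

/-- Weighted fractional chromatic number `χ_f(G,w)`. -/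
noncomputable def chiF (G : SimpleGraph V) (w : V → ℝ) : ℝ :=
  sInf {r : ℝ | ∃ y : Finset V → ℝ,
    (∀ S, 0 ≤ y S) ∧ (∀ S, ¬ IsStableSet G S → y S = 0) ∧
    (∀ i, w i ≤ ∑ S : Finset V, (if i ∈ S then y S else 0)) ∧
    r = ∑ S : Finset V, y S}

/-- The stable set polytope `STAB(G)`. -/
def STABset (G : SimpleGraph V) : Set (V → ℝ) :=
  convexHull ℝ {x : V → ℝ | ∃ S : Finset V, IsStableSet G S ∧
    x = fun i => if i ∈ S then (1 : ℝ) else 0}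

/-- The fractional stable set polytope `QSTAB(G)`. -/
def QSTABset (H : SimpleGraph V) : Set (V → ℝ) :=
  {x | 0 ≤ x ∧ ∀ K : Finset V, H.IsClique (↑K : Set V) → ∑ i ∈ K, x i ≤ 1}

/-- The set of (real) eigenvalues of a matrix. -/
def spectrumSet (M : Matrix V V ℝ) : Set ℝ :=
  {t | ∃ x : V → ℝ, x ≠ 0 ∧ M.mulVec x = t • x}

/-- Largest eigenvalue. -/
noncomputable def lambdaMax (M : Matrix V V ℝ) : ℝ := sSup (spectrumSet M)

/-- Smallest eigenvalue. -/
noncomputable def lambdaMin (M : Matrix V V ℝ) : ℝ := sInf (spectrumSet M)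

/-- Positive semidefinite square root (zero on non-PSD matrices). -/
noncomputable def psdSqrt (M : Matrix V V ℝ) : Matrix V V ℝ :=
  letI := Classical.dec M.PosSemidef
  if h : M.PosSemidef then
    (h.1.eigenvectorUnitary : Matrix V V ℝ) *
      Matrix.diagonal ((RCLike.ofReal : ℝ → ℝ) ∘ Real.sqrt ∘ h.1.eigenvalues) *
      (star h.1.eigenvectorUnitary : Matrix V V ℝ) else 0

/-- `Â = A / (-λ_min(A))` for nonzero `A`, and `0̂ = 0`. -/
noncomputable def hatM (A : Matrix V V ℝ) : Matrix V V ℝ :=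
  if A = 0 then 0 else (-(lambdaMin A))⁻¹ • A

/-- `A` is a generalized adjacency matrix of `G`: symmetric, with `A i j = 0`
whenever `i` and `j` are non-adjacent (in particular on the diagonal). -/
def IsGenAdj (G : SimpleGraph V) (A : Matrix V V ℝ) : Prop :=
  A.IsSymm ∧ ∀ i j, ¬ G.Adj i j → A i j = 0

/-- Weighted Hoffman bound `H(A,w) = λ_max(W^{1/2}(I+Â)W^{1/2})`, `W = Diag w`. -/
noncomputable def hoffman (A : Matrix V V ℝ) (w : V → ℝ) : ℝ :=
  lambdaMax (psdSqrt (Matrix.diagonal w) * (1 + hatM A) * psdSqrt (Matrix.diagonal w))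

/-- The feasible region `𝒰_A` of the SDP defining `Υ(A,·)`. -/
def Uset (A : Matrix V V ℝ) : Set (V → ℝ) :=
  {x | 0 ≤ x ∧ ((1 : Matrix V V ℝ) -
    psdSqrt (1 + hatM A) * Matrix.diagonal x * psdSqrt (1 + hatM A)).PosSemidef}

/-- `Υ(A,w) = max{⟨w,x⟩ : x ≥ 0, (I+Â)^{1/2} Diag(x) (I+Â)^{1/2} ⪯ I}`. -/
noncomputable def upsilon (A : Matrix V V ℝ) (w : V → ℝ) : ℝ :=
  sSup {r : ℝ | ∃ x ∈ Uset A, r = ip w x}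

/-- The diagonal of a matrix, as a vector. -/
def diagVec (M : Matrix V V ℝ) : V → ℝ := fun i => M i i

/-- The convex corner `ℋ_A`. -/
def Hset (A : Matrix V V ℝ) : Set (V → ℝ) :=
  {x | 0 ≤ x ∧ ∃ Y : Matrix V V ℝ, Y.PosSemidef ∧ Y.trace ≤ 1 ∧
    ∀ i, x i ≤ diagVec (psdSqrt (1 + hatM A) * Y * psdSqrt (1 + hatM A)) i}

/-- Objective function of Luz's convex quadratic program:
`2⟨w,x⟩ − ⟨x, W^{1/2}(I+Â)W^{1/2} x⟩`. -/
noncomputable def luzObj (A : Matrix V V ℝ) (w x : V → ℝ) : ℝ :=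
  2 * ip w x - ∑ i, x i *
    ((psdSqrt (Matrix.diagonal w) * (1 + hatM A) * psdSqrt (Matrix.diagonal w)).mulVec x) i

/-- Luz's bound `ℓ(A,w)` as a real number (supremum of the CQP objective). -/
noncomputable def luz (A : Matrix V V ℝ) (w : V → ℝ) : ℝ :=
  sSup {r : ℝ | ∃ x : V → ℝ, 0 ≤ x ∧ r = luzObj A w x}

/-- Luz's bound `ℓ(A,w)` with values in `ℝ ∪ {±∞}`. -/
noncomputable def luzE (A : Matrix V V ℝ) (w : V → ℝ) : EReal :=
  sSup {r : EReal | ∃ x : V → ℝ, 0 ≤ x ∧ r = ((luzObj A w x : ℝ) : EReal)}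

/-- The theta body `TH(G)`. -/
def THbody (G : SimpleGraph V) : Set (V → ℝ) :=
  {x | 0 ≤ x ∧ ∃ X : Matrix V V ℝ, X.PosSemidef ∧ (∀ i, X i i = x i) ∧
    (∀ i j, G.Adj i j → X i j = 0) ∧
    (Matrix.fromBlocks (1 : Matrix Unit Unit ℝ) (Matrix.of fun _ j => x j)
      (Matrix.of fun i _ => x i) X).PosSemidef}

/-- Weighted Lovász theta number `θ(G,w)`. -/
noncomputable def thetaW (G : SimpleGraph V) (w : V → ℝ) : ℝ :=
  sSup {r : ℝ | ∃ x ∈ THbody G, r = ip w x}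

namespace GDAux
set_option linter.unusedSectionVars false

lemma ip_comm (w z : V → ℝ) : ip w z = ip z w :=
  Finset.sum_congr rfl fun i _ => mul_comm _ _

lemma ip_zero_left (z : V → ℝ) : ip 0 z = 0 := by simp [ip]
lemma ip_zero_right (w : V → ℝ) : ip w 0 = 0 := by simp [ip]

lemma ip_smul_left (c : ℝ) (w z : V → ℝ) : ip (c • w) z = c * ip w z := by
  simp [ip, Finset.mul_sum, mul_assoc]

lemma ip_smul_right (c : ℝ) (w z : V → ℝ) : ip w (c • z) = c * ip w z := by
  simp [ip, Finset.mul_sum, mul_left_comm]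

lemma ip_add_right (w z z' : V → ℝ) : ip w (z + z') = ip w z + ip w z' := by
  simp [ip, mul_add, Finset.sum_add_distrib]

lemma ip_mono_right {w z z' : V → ℝ} (hw : 0 ≤ w) (h : z ≤ z') : ip w z ≤ ip w z' :=
  Finset.sum_le_sum fun i _ => mul_le_mul_of_nonneg_left (h i) (hw i)

variable {κ : (V → ℝ) → ℝ}

lemma single_pos (hκ : IsPDMGauge κ) (i : V) : 0 < κ (Pi.single i 1) := by
  refine hκ.2.2.2.2.1 _ (fun j => ?_) ?_
  · by_cases h : j = i <;> simp [h, Pi.single_apply]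
  · intro h
    have := congrFun h i
    simp at this

lemma mem_bound (hκ : IsPDMGauge κ) {x : V → ℝ} (hx : 0 ≤ x) (hx1 : κ x ≤ 1) (i : V) :
    x i ≤ (κ (Pi.single i (1:ℝ)))⁻¹ := by
  have hpos := single_pos hκ i
  rcases eq_or_lt_of_le (hx i) with h | h
  · have : x i = 0 := by simpa using h.symm
    rw [this]; positivity
  · have hxi : (0:ℝ) < x i := by simpa using h
    have hle : x i • (Pi.single i (1:ℝ) : V → ℝ) ≤ x := by
      intro j
      by_cases hj : j = i
      · subst hj; simp
      · simp only [Pi.smul_apply, Pi.single_apply, if_neg hj, smul_eq_mul, mul_zero]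
        exact hx j
    have hnn : 0 ≤ (Pi.single i (1:ℝ) : V → ℝ) := fun j => by
      by_cases hj : j = i <;> simp [Pi.single_apply, hj]
    have hsnn : 0 ≤ x i • (Pi.single i (1:ℝ) : V → ℝ) := fun j => by
      have h3 := hnn j
      simp only [Pi.smul_apply, smul_eq_mul]
      exact mul_nonneg hxi.le h3
    have h1 : κ (x i • (Pi.single i (1:ℝ) : V → ℝ)) = x i * κ (Pi.single i (1:ℝ)) :=
      hκ.2.2.1 _ _ hxi hnn
    have h2 : x i * κ (Pi.single i (1:ℝ)) ≤ 1 := by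
      rw [← h1]
      exact le_trans (hκ.2.2.2.2.2 _ _ hsnn hle) hx1
    rw [inv_eq_one_div]
    exact (le_div_iff₀ hpos).2 h2


def dset (κ : (V → ℝ) → ℝ) (z : V → ℝ) : Set ℝ :=
  {r : ℝ | ∃ w : V → ℝ, 0 ≤ w ∧ κ w ≤ 1 ∧ r = ip w z}

lemma dualGauge_eq (κ : (V → ℝ) → ℝ) (z : V → ℝ) : dualGauge κ z = sSup (dset κ z) := rfl

lemma zero_mem_dset (hκ : IsPDMGauge κ) (z : V → ℝ) : (0:ℝ) ∈ dset κ z :=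
  ⟨0, le_refl _, by rw [hκ.1]; norm_num, (ip_zero_left z).symm⟩

lemma dset_nonempty (hκ : IsPDMGauge κ) (z : V → ℝ) : (dset κ z).Nonempty :=
  ⟨0, zero_mem_dset hκ z⟩

lemma dset_bddAbove (hκ : IsPDMGauge κ) {z : V → ℝ} (hz : 0 ≤ z) : BddAbove (dset κ z) := by
  refine ⟨∑ i, (κ (Pi.single i (1:ℝ)))⁻¹ * z i, ?_⟩
  rintro r ⟨w, hw, hw1, rfl⟩
  exact Finset.sum_le_sum fun i _ =>
    mul_le_mul_of_nonneg_right (mem_bound hκ hw hw1 i) (hz i)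

lemma dualGauge_nonneg (hκ : IsPDMGauge κ) {z : V → ℝ} (hz : 0 ≤ z) : 0 ≤ dualGauge κ z :=
  le_csSup (dset_bddAbove hκ hz) (zero_mem_dset hκ z)

lemma dualGauge_zero (hκ : IsPDMGauge κ) : dualGauge κ (0 : V → ℝ) = 0 := by
  rw [dualGauge_eq]
  have : dset κ (0 : V → ℝ) = {0} := by
    ext r
    constructor
    · rintro ⟨w, hw, hw1, rfl⟩; simpa using ip_zero_right w
    · rintro rfl; exact zero_mem_dset hκ 0
  rw [this, csSup_singleton]

lemma le_dualGauge (hκ : IsPDMGauge κ) {w z : V → ℝ} (hw : 0 ≤ w) (hw1 : κ w ≤ 1)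
    (hz : 0 ≤ z) : ip w z ≤ dualGauge κ z :=
  le_csSup (dset_bddAbove hκ hz) ⟨w, hw, hw1, rfl⟩

lemma dualGauge_le (hκ : IsPDMGauge κ) {z : V → ℝ} {a : ℝ}
    (h : ∀ w : V → ℝ, 0 ≤ w → κ w ≤ 1 → ip w z ≤ a) : dualGauge κ z ≤ a :=
  csSup_le (dset_nonempty hκ z) (by rintro r ⟨w, hw, hw1, rfl⟩; exact h w hw hw1)

lemma dualGauge_smul (hκ : IsPDMGauge κ) {c : ℝ} {z : V → ℝ} (hc : 0 < c) (hz : 0 ≤ z) :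
    dualGauge κ (c • z) = c * dualGauge κ z := by
  have hcz : 0 ≤ c • z := fun i => by
    simpa using mul_nonneg hc.le (hz i)
  apply le_antisymm
  · refine dualGauge_le hκ fun w hw hw1 => ?_
    rw [ip_smul_right]
    exact mul_le_mul_of_nonneg_left (le_dualGauge hκ hw hw1 hz) hc.le
  · have h1 : dualGauge κ z ≤ c⁻¹ * dualGauge κ (c • z) := by
      refine dualGauge_le hκ fun w hw hw1 => ?_
      have : ip w z = c⁻¹ * ip w (c • z) := by
        rw [ip_smul_right, ← mul_assoc, inv_mul_cancel₀ hc.ne', one_mul]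
      rw [this]
      exact mul_le_mul_of_nonneg_left (le_dualGauge hκ hw hw1 hcz) (by positivity)
    calc c * dualGauge κ z ≤ c * (c⁻¹ * dualGauge κ (c • z)) :=
          mul_le_mul_of_nonneg_left h1 hc.le
      _ = dualGauge κ (c • z) := by
          rw [← mul_assoc, mul_inv_cancel₀ hc.ne', one_mul]

lemma dualGauge_add (hκ : IsPDMGauge κ) {z z' : V → ℝ} (hz : 0 ≤ z) (hz' : 0 ≤ z') :
    dualGauge κ (z + z') ≤ dualGauge κ z + dualGauge κ z' := by
  refine dualGauge_le hκ fun w hw hw1 => ?_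
  rw [ip_add_right]
  exact add_le_add (le_dualGauge hκ hw hw1 hz) (le_dualGauge hκ hw hw1 hz')

lemma dualGauge_pos (hκ : IsPDMGauge κ) {z : V → ℝ} (hz : 0 ≤ z) (hz0 : z ≠ 0) :
    0 < dualGauge κ z := by
  obtain ⟨i, hi⟩ : ∃ i, z i ≠ 0 := by
    by_contra h
    push_neg at h
    exact hz0 (funext h)
  have hzi : 0 < z i := lt_of_le_of_ne (hz i) (Ne.symm hi)
  have hpos := single_pos hκ i
  set w : V → ℝ := (κ (Pi.single i (1:ℝ)))⁻¹ • (Pi.single i (1:ℝ) : V → ℝ) with hwdef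
  have hnn : 0 ≤ (Pi.single i (1:ℝ) : V → ℝ) := fun j => by
    by_cases hj : j = i <;> simp [Pi.single_apply, hj]
  have hw : 0 ≤ w := fun j => by
    have := hnn j
    simp only [hwdef, Pi.smul_apply, smul_eq_mul]
    exact mul_nonneg (inv_nonneg.2 hpos.le) this
  have hw1 : κ w = 1 := by
    rw [hwdef, hκ.2.2.1 _ _ (inv_pos.2 hpos) hnn, inv_mul_cancel₀ hpos.ne']
  have hipw : ip w z = (κ (Pi.single i (1:ℝ)))⁻¹ * z i := by
    rw [hwdef, ip_smul_left]
    congr 1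
    rw [ip]
    rw [Finset.sum_eq_single i]
    · simp
    · intro j _ hj; simp [Pi.single_apply, hj]
    · intro h; exact absurd (Finset.mem_univ i) h
  have : 0 < ip w z := by
    rw [hipw]; exact mul_pos (inv_pos.2 hpos) hzi
  exact lt_of_lt_of_le this (le_dualGauge hκ hw hw1.le hz)

lemma dualGauge_mono (hκ : IsPDMGauge κ) {z z' : V → ℝ} (hz : 0 ≤ z) (h : z ≤ z') :
    dualGauge κ z ≤ dualGauge κ z' := by
  have hz' : 0 ≤ z' := le_trans hz h
  refine dualGauge_le hκ fun w hw hw1 => ?_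
  exact le_trans (ip_mono_right hw h) (le_dualGauge hκ hw hw1 hz')

lemma dualGauge_pdm (hκ : IsPDMGauge κ) : IsPDMGauge (dualGauge κ) :=
  ⟨dualGauge_zero hκ, fun _ hz => dualGauge_nonneg hκ hz,
   fun _ _ hc hz => dualGauge_smul hκ hc hz,
   fun _ _ hz hz' => dualGauge_add hκ hz hz',
   fun _ hz hz0 => dualGauge_pos hκ hz hz0,
   fun _ _ hz h => dualGauge_mono hκ hz h⟩

lemma ip_le_mul (hκ : IsPDMGauge κ) {w z : V → ℝ} (hw : 0 ≤ w) (hz : 0 ≤ z) :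
    ip w z ≤ κ w * dualGauge κ z := by
  by_cases h0 : w = 0
  · subst h0
    rw [ip_zero_left, hκ.1, zero_mul]
  · have hpos : 0 < κ w := hκ.2.2.2.2.1 w hw h0
    have hww : 0 ≤ (κ w)⁻¹ • w := fun j => by
      have := hw j
      simp only [Pi.smul_apply, smul_eq_mul]
      exact mul_nonneg (inv_nonneg.2 hpos.le) this
    have h1 : κ ((κ w)⁻¹ • w) ≤ 1 := by
      rw [hκ.2.2.1 _ _ (inv_pos.2 hpos) hw, inv_mul_cancel₀ hpos.ne']
    have h2 := le_dualGauge hκ hww h1 hz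
    rw [ip_smul_left] at h2
    calc ip w z = κ w * ((κ w)⁻¹ * ip w z) := by
          rw [← mul_assoc, mul_inv_cancel₀ hpos.ne', one_mul]
      _ ≤ κ w * dualGauge κ z := mul_le_mul_of_nonneg_left h2 hpos.le

lemma unitBall_eq_abl (hκ : IsPDMGauge κ) :
    {z : V → ℝ | 0 ≤ z ∧ dualGauge κ z ≤ 1} = abl {x : V → ℝ | 0 ≤ x ∧ κ x ≤ 1} := by
  ext z
  constructor
  · rintro ⟨hz, hz1⟩
    exact ⟨hz, fun x ⟨hx, hx1⟩ => le_trans (le_dualGauge hκ hx hx1 hz) hz1⟩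
  · rintro ⟨hz, h⟩
    exact ⟨hz, dualGauge_le hκ fun w hw hw1 => h w ⟨hw, hw1⟩⟩


lemma kappa_lip (hκ : IsPDMGauge κ) {x y : V → ℝ} (hx : 0 ≤ x) (hy : 0 ≤ y) :
    κ x ≤ κ y + κ (fun i => max (x i - y i) 0) := by
  set p : V → ℝ := fun i => max (x i - y i) 0 with hp
  have hpnn : 0 ≤ p := fun i => le_max_right _ _
  have hle : x ≤ y + p := fun i => by
    simp only [Pi.add_apply, hp]
    have : x i - y i ≤ max (x i - y i) 0 := le_max_left _ _
    linarith
  exact le_trans (hκ.2.2.2.2.2 _ _ hx hle) (hκ.2.2.2.1 _ _ hy hpnn)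

lemma kappa_small (hκ : IsPDMGauge κ) {p : V → ℝ} {ε : ℝ} (hp : 0 ≤ p) (hε : 0 < ε)
    (h : ∀ i, p i ≤ ε) : κ p ≤ ε * κ 1 := by
  have h1 : (0:V → ℝ) ≤ 1 := fun i => by norm_num
  have hle : p ≤ ε • (1 : V → ℝ) := fun i => by
    simpa using h i
  calc κ p ≤ κ (ε • (1 : V → ℝ)) := hκ.2.2.2.2.2 _ _ hp hle
    _ = ε * κ 1 := hκ.2.2.1 _ _ hε h1

lemma C_closed (hκ : IsPDMGauge κ) : IsClosed {x : V → ℝ | 0 ≤ x ∧ κ x ≤ 1} := by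
  apply IsSeqClosed.isClosed
  intro xs p hmem hlim
  have hxs : ∀ n, 0 ≤ xs n := fun n => (hmem n).1
  have hp : 0 ≤ p := by
    intro i
    have hli : Filter.Tendsto (fun n => xs n i) Filter.atTop (nhds (p i)) :=
      (tendsto_pi_nhds.1 hlim) i
    exact ge_of_tendsto hli (Filter.Eventually.of_forall fun n => hxs n i)
  refine ⟨hp, ?_⟩
  refine le_of_forall_pos_le_add fun ε hε => ?_
  have hκ1 : 0 ≤ κ (1 : V → ℝ) := hκ.2.1 _ (fun i => by norm_num)
  set δ : ℝ := ε / (κ (1 : V → ℝ) + 1) with hδ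
  have hδpos : 0 < δ := by positivity
  obtain ⟨N, hN⟩ := (Metric.tendsto_atTop.1 hlim) δ hδpos
  have hdist := hN N (le_refl N)
  have hcomp : ∀ i, p i - xs N i ≤ δ := fun i => by
    have h1 : dist (xs N i) (p i) ≤ dist (xs N) p := dist_le_pi_dist _ _ i
    have h2 : |xs N i - p i| < δ := lt_of_le_of_lt (by rwa [Real.dist_eq] at h1) hdist
    have := abs_lt.1 h2
    linarith [this.1]
  have hlip := kappa_lip hκ hp (hxs N)
  have hsmall : κ (fun i => max (p i - xs N i) 0) ≤ δ * κ (1 : V → ℝ) := by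
    refine kappa_small hκ (fun i => le_max_right _ _) hδpos fun i => ?_
    exact max_le (hcomp i) hδpos.le
  have hδκ : δ * κ (1 : V → ℝ) ≤ ε := by
    rw [hδ, div_mul_eq_mul_div, div_le_iff₀ (by positivity)]
    nlinarith
  have := (hmem N).2
  linarith

lemma C_convex (hκ : IsPDMGauge κ) : Convex ℝ {x : V → ℝ | 0 ≤ x ∧ κ x ≤ 1} := by
  rintro x ⟨hx, hx1⟩ y ⟨hy, hy1⟩ a b ha hb hab
  have hnn : 0 ≤ a • x + b • y := fun i => by
    have h1 := hx i; have h2 := hy i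
    simp only [Pi.add_apply, Pi.smul_apply, smul_eq_mul]
    exact add_nonneg (mul_nonneg ha h1) (mul_nonneg hb h2)
  refine ⟨hnn, ?_⟩
  rcases eq_or_lt_of_le ha with ha0 | ha0
  · have hb1 : b = 1 := by linarith
    subst hb1
    rw [← ha0]
    simpa using hy1
  rcases eq_or_lt_of_le hb with hb0 | hb0
  · have ha1 : a = 1 := by linarith
    subst ha1
    rw [← hb0]
    simpa using hx1
  have hax : 0 ≤ a • x := fun i => by
    simp only [Pi.smul_apply, smul_eq_mul]; exact mul_nonneg ha (hx i)
  have hby : 0 ≤ b • y := fun i => by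
    simp only [Pi.smul_apply, smul_eq_mul]; exact mul_nonneg hb (hy i)
  calc κ (a • x + b • y) ≤ κ (a • x) + κ (b • y) := hκ.2.2.2.1 _ _ hax hby
    _ = a * κ x + b * κ y := by rw [hκ.2.2.1 _ _ ha0 hx, hκ.2.2.1 _ _ hb0 hy]
    _ ≤ a * 1 + b * 1 := add_le_add (mul_le_mul_of_nonneg_left hx1 ha)
        (mul_le_mul_of_nonneg_left hy1 hb)
    _ = 1 := by linarith

lemma C_compact (hκ : IsPDMGauge κ) : IsCompact {x : V → ℝ | 0 ≤ x ∧ κ x ≤ 1} := by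
  refine IsCompact.of_isClosed_subset
    (isCompact_Icc (a := (0 : V → ℝ)) (b := fun i => (κ (Pi.single i (1:ℝ)))⁻¹))
    (C_closed hκ) ?_
  rintro x ⟨hx, hx1⟩
  exact Set.mem_Icc.2 ⟨hx, fun i => mem_bound hκ hx hx1 i⟩

lemma C_interior (hκ : IsPDMGauge κ) :
    (interior {x : V → ℝ | 0 ≤ x ∧ κ x ≤ 1}).Nonempty := by
  have hκ1 : 0 ≤ κ (1 : V → ℝ) := hκ.2.1 _ (fun i => by norm_num)
  set b : ℝ := (2 * (κ (1 : V → ℝ) + 1))⁻¹ with hb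
  have hbpos : 0 < b := by positivity
  refine ⟨fun _ => b, ?_⟩
  rw [mem_interior]
  refine ⟨Metric.ball (fun _ => b) b, ?_, Metric.isOpen_ball, Metric.mem_ball_self hbpos⟩
  intro y hy
  have hyc : ∀ i, |y i - b| < b := fun i => by
    have h1 : dist (y i) b ≤ dist y (fun _ => b) := dist_le_pi_dist y (fun _ => b) i
    have := lt_of_le_of_lt h1 (Metric.mem_ball.1 hy)
    rwa [Real.dist_eq] at this
  have hy0 : 0 ≤ y := fun i => by
    show (0:ℝ) ≤ y i
    have := (abs_lt.1 (hyc i)).1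
    linarith
  refine ⟨hy0, ?_⟩
  have hle : y ≤ (2 * b) • (1 : V → ℝ) := fun i => by
    have := (abs_lt.1 (hyc i)).2
    simp only [Pi.smul_apply, Pi.one_apply, smul_eq_mul, mul_one]
    linarith
  calc κ y ≤ κ ((2 * b) • (1 : V → ℝ)) :=
        hκ.2.2.2.2.2 _ _ hy0 hle
    _ = (2 * b) * κ (1 : V → ℝ) := hκ.2.2.1 _ _ (by positivity) (fun i => by norm_num)
    _ ≤ 1 := by
        rw [hb]
        have hpos : (0:ℝ) < κ (1 : V → ℝ) + 1 := by positivity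
        have heq : 2 * (2 * (κ (1 : V → ℝ) + 1))⁻¹ * κ (1 : V → ℝ)
            = κ (1 : V → ℝ) / (κ (1 : V → ℝ) + 1) := by
          field_simp
        rw [heq, div_le_one hpos]
        linarith

lemma C_corner (hκ : IsPDMGauge κ) : IsConvexCorner {x : V → ℝ | 0 ≤ x ∧ κ x ≤ 1} :=
  ⟨C_compact hκ, C_convex hκ, C_interior hκ, fun _ hx => hx.1,
   fun x y hx hxy hyC => ⟨hx, le_trans (hκ.2.2.2.2.2 _ _ hx hxy) hyC.2⟩⟩


lemma clm_eq_ip (f : (V → ℝ) →L[ℝ] ℝ) (x : V → ℝ) :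
    f x = ip x (fun i => f (fun j => if i = j then 1 else 0)) := by
  conv_lhs => rw [pi_eq_sum_univ x]
  rw [map_sum, ip]
  refine Finset.sum_congr rfl fun i _ => ?_
  rw [map_smul]
  rfl

lemma bipolar (hκ : IsPDMGauge κ) {w : V → ℝ} (hw : 0 ≤ w) :
    dualGauge (dualGauge κ) w = κ w := by
  have hκ' := dualGauge_pdm hκ
  have hκ'' := dualGauge_pdm hκ'
  by_cases hw0 : w = 0
  · subst hw0
    rw [hκ''.1, hκ.1]
  -- ≤ direction
  have hle : dualGauge (dualGauge κ) w ≤ κ w := by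
    refine dualGauge_le hκ' fun z hz hz1 => ?_
    calc ip z w = ip w z := ip_comm z w
      _ ≤ κ w * dualGauge κ z := ip_le_mul hκ hw hz
      _ ≤ κ w * 1 := mul_le_mul_of_nonneg_left hz1 (hκ.2.1 w hw)
      _ = κ w := mul_one _
  refine le_antisymm hle ?_
  by_contra hlt
  push_neg at hlt
  set t : ℝ := dualGauge (dualGauge κ) w with ht
  have htpos : 0 < t := hκ''.2.2.2.2.1 w hw hw0
  set w' : V → ℝ := t⁻¹ • w with hw'
  have hw'nn : 0 ≤ w' := fun i => by
    have := hw i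
    simp only [hw', Pi.smul_apply, smul_eq_mul]
    exact mul_nonneg (inv_nonneg.2 htpos.le) this
  have hww' : w = t • w' := by
    rw [hw', smul_smul, mul_inv_cancel₀ htpos.ne', one_smul]
  have hκw' : 1 < κ w' := by
    rw [hw', hκ.2.2.1 _ _ (inv_pos.2 htpos) hw]
    rw [← inv_mul_cancel₀ htpos.ne']
    exact mul_lt_mul_of_pos_left hlt (inv_pos.2 htpos)
  have hw'notC : w' ∉ {x : V → ℝ | 0 ≤ x ∧ κ x ≤ 1} := fun h => absurd h.2 (not_le.2 hκw')
  obtain ⟨f, u, hfu, huf⟩ :=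
    geometric_hahn_banach_closed_point (C_convex hκ) (C_closed hκ) hw'notC
  set y : V → ℝ := fun i => f (fun j => if i = j then 1 else 0) with hy
  have hfy : ∀ x : V → ℝ, f x = ip x y := fun x => clm_eq_ip f x
  set yp : V → ℝ := fun i => max (y i) 0 with hyp
  have hypnn : 0 ≤ yp := fun i => le_max_right _ _
  -- claim A
  have hA : ∀ a : V → ℝ, 0 ≤ a → κ a ≤ 1 → ip a yp < u := by
    intro a ha ha1
    set a' : V → ℝ := fun i => if 0 ≤ y i then a i else 0 with ha'
    have ha'nn : 0 ≤ a' := fun i => by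
      by_cases h : 0 ≤ y i <;> simp [ha', h]
      exact ha i
    have ha'le : a' ≤ a := fun i => by
      by_cases h : 0 ≤ y i <;> simp [ha', h]
      exact ha i
    have ha'C : (0:V → ℝ) ≤ a' ∧ κ a' ≤ 1 :=
      ⟨ha'nn, le_trans (hκ.2.2.2.2.2 _ _ ha'nn ha'le) ha1⟩
    have heq : ip a yp = ip a' y := by
      refine Finset.sum_congr rfl fun i _ => ?_
      by_cases h : 0 ≤ y i
      · simp [hyp, ha', h, max_eq_left h]
      · push_neg at h
        simp [hyp, ha', not_le.2 h, max_eq_right h.le]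
    rw [heq, ← hfy a']
    exact hfu a' ha'C
  -- u positive
  have hu0 : 0 < u := by
    have := hA 0 (le_refl _) (by rw [hκ.1]; norm_num)
    rwa [ip_zero_left] at this
  -- claim B
  have hB : u < ip w' yp := by
    refine lt_of_lt_of_le huf ?_
    rw [hfy w']
    exact ip_mono_right hw'nn fun i => le_max_left _ _
  -- build z
  set z : V → ℝ := u⁻¹ • yp with hz
  have hznn : 0 ≤ z := fun i => by
    have := hypnn i
    simp only [hz, Pi.smul_apply, smul_eq_mul]
    exact mul_nonneg (inv_nonneg.2 hu0.le) this
  have hz1 : dualGauge κ z ≤ 1 := by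
    refine dualGauge_le hκ fun a ha ha1 => ?_
    have : ip a yp ≤ u := (hA a ha ha1).le
    calc ip a z = u⁻¹ * ip a yp := by rw [hz, ip_smul_right]
      _ ≤ u⁻¹ * u := mul_le_mul_of_nonneg_left this (inv_nonneg.2 hu0.le)
      _ = 1 := inv_mul_cancel₀ hu0.ne'
  have hzw : t < ip z w := by
    have h1 : ip yp w = t * ip yp w' := by
      rw [ip_comm yp w, hww', ip_smul_left, ip_comm w' yp]
    calc t = u⁻¹ * (t * u) := by
          rw [mul_comm t u, ← mul_assoc, inv_mul_cancel₀ hu0.ne', one_mul]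
      _ < u⁻¹ * (t * ip w' yp) := by
          apply mul_lt_mul_of_pos_left _ (inv_pos.2 hu0)
          exact mul_lt_mul_of_pos_left hB htpos
      _ = ip z w := by
          rw [hz, ip_comm (u⁻¹ • yp) w, ip_smul_right, ip_comm w yp, h1, ip_comm yp w']
  have := le_dualGauge hκ' hznn hz1 hw
  rw [← ht] at this
  exact absurd (lt_of_lt_of_le hzw this) (lt_irrefl t)

end GDAux

/-- gauge duality. For a positive definite monotone gauge `κ` with
unit convex corner `C`: (i) `C` is a convex corner; (ii) `κ∘` is a positive
definite monotone gauge with unit convex corner `abl(C)`; (iii) `κ∘∘ = κ` and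
`abl(abl(C)) = C`; (iv) `⟨w,z⟩ ≤ κ(w)·κ∘(z)`. -/
theorem gauge_duality_theorem (κ : (V → ℝ) → ℝ) (hκ : IsPDMGauge κ) :
    IsConvexCorner {x : V → ℝ | 0 ≤ x ∧ κ x ≤ 1} ∧
    (IsPDMGauge (dualGauge κ) ∧
      {z : V → ℝ | 0 ≤ z ∧ dualGauge κ z ≤ 1} = abl {x : V → ℝ | 0 ≤ x ∧ κ x ≤ 1}) ∧
    ((∀ w : V → ℝ, 0 ≤ w → dualGauge (dualGauge κ) w = κ w) ∧
      abl (abl {x : V → ℝ | 0 ≤ x ∧ κ x ≤ 1}) = {x : V → ℝ | 0 ≤ x ∧ κ x ≤ 1}) ∧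
    (∀ w z : V → ℝ, 0 ≤ w → 0 ≤ z → ip w z ≤ κ w * dualGauge κ z) := by
  refine ⟨GDAux.C_corner hκ, ⟨GDAux.dualGauge_pdm hκ, GDAux.unitBall_eq_abl hκ⟩,
    ⟨fun w hw => GDAux.bipolar hκ hw, ?_⟩, fun w z hw hz => GDAux.ip_le_mul hκ hw hz⟩
  rw [← GDAux.unitBall_eq_abl hκ, ← GDAux.unitBall_eq_abl (GDAux.dualGauge_pdm hκ)]
  ext x
  simp only [Set.mem_setOf_eq]
  constructor
  · rintro ⟨hx, h1⟩
    exact ⟨hx, by rwa [GDAux.bipolar hκ hx] at h1⟩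
  · rintro ⟨hx, h1⟩
    exact ⟨hx, by rwa [GDAux.bipolar hκ hx]⟩
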